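/- Let D be a (λ, μ)-regular κ-complete ultrafilter (λ, μ, κ infinite cardinals). Then D is ((λ^{<κ})⁺, μ^{<κ})-regular. Moreover, if ν^{<κ} < λ^{<κ} for every cardinal ν < λ, then D is (λ^{<κ}, μ^{<κ})-regular. -/

import Mathlib

universe u

open Cardinal

namespace Paper

/-- Form I: the ultrafilter `D` is `(a, b)`-regular: there is a family of `b`-many
members of `D` such that the intersection of any `a`-many of them is empty. -/
def IsRegularUF {I : Type u} (D : Ultrafilter I) (a b : Cardinal.{u}) : Prop :=
  ∃ X : b.out → Set I, (∀ β, X β ∈ D) ∧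
    ∀ B : Set b.out, #B = a → ⋂ β ∈ B, X β = ∅

/-- `D` is `κ`-decomposable: there is `f : I → κ` such that the preimage of any
subset of size `< κ` is not in `D`. -/
def IsDecomposable {I : Type u} (D : Ultrafilter I) (κ : Cardinal.{u}) : Prop :=
  ∃ f : I → κ.out, ∀ X : Set κ.out, #X < κ → f ⁻¹' X ∉ D

/-- The cardinality of the ultrapower `∏_D c` of a cardinal `c` modulo `D`. -/
noncomputable def ultraPowCard {I : Type u} (D : Ultrafilter I) (c : Cardinal.{u}) :
    Cardinal.{u} :=
  #((D : Filter I).Germ c.out)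

/-- The cofinality of the linearly ordered ultrapower `∏_D ⟨κ, <⟩`:
the least cardinality of a cofinal subset. -/
noncomputable def germOrderCof {I : Type u} (D : Ultrafilter I) (κ : Cardinal.{u}) :
    Cardinal.{u} :=
  sInf { c | ∃ S : Set ((D : Filter I).Germ κ.ord.ToType), #S = c ∧ ∀ x, ∃ y ∈ S, x ≤ y }

/-- `f` is a `κ`-least function for `D`. -/
def IsKLeastFunction {I : Type u} (D : Ultrafilter I) (κ : Cardinal.{u})
    (f : I → Ordinal.{u}) : Prop :=
  (∀ i, f i < κ.ord) ∧
  (∀ α < κ.ord, { i | α < f i } ∈ D) ∧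
  ∀ g : I → Ordinal.{u}, (∀ i, g i < κ.ord) → { i | g i < f i } ∈ D →
    ∃ α < κ.ord, { i | g i < α } ∈ D

/-- The product of two ultrafilters:
`X ∈ D ×ᵤ D'` iff `{i | {i' | (i,i') ∈ X} ∈ D'} ∈ D`. -/
def uprod {I I' : Type u} (D : Ultrafilter I) (D' : Ultrafilter I') : Ultrafilter (I × I') :=
  D.bind fun i => D'.map fun i' => (i, i')

/-- The `D`-sum of the ultrafilters `Di`. -/
def usum {I : Type u} {J : I → Type u} (D : Ultrafilter I) (Di : ∀ i, Ultrafilter (J i)) :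
    Ultrafilter (Σ i, J i) :=
  D.bind fun i => (Di i).map fun j => ⟨i, j⟩

/-- `D` is `κ`-complete: intersections of fewer than `κ` members of `D` are in `D`. -/
def IsComplete {I : Type u} (D : Ultrafilter I) (κ : Cardinal.{u}) : Prop :=
  ∀ S : Set (Set I), #S < κ → (∀ s ∈ S, s ∈ D) → ⋂₀ S ∈ D

/-- `COV(λ, λ', μ)`: the least cardinality of a family of subsets of `λ`, each of
cardinality `< λ'`, such that every subset of `λ` of cardinality `< μ` is contained
in a member of the family. -/
noncomputable def cov (lam lam' μ : Cardinal.{u}) : Cardinal.{u} :=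
  sInf { c | ∃ H : Set (Set lam.out), #H = c ∧ (∀ x ∈ H, #x < lam') ∧
      ∀ s : Set lam.out, #s < μ → ∃ x ∈ H, s ⊆ x }

/-- Iterated beth: `bethIter 0 lam = lam`, `bethIter (m+1) lam = 2 ^ bethIter m lam`. -/
def bethIter (m : ℕ) (lam : Cardinal.{u}) : Cardinal.{u} :=
  (fun c => (2 : Cardinal.{u}) ^ c)^[m] lam

/-!
Intersect a witness `(X_β)_{β<μ}` of `(λ, μ)`-regularity along the subsets of `μ` of size `< κ`;
there are at least `μ^{<κ}` of them, and each intersection lies in `D` by `κ`-completeness.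
A point `i` lies in `⋂_{β ∈ s} X_β` only when `s ⊆ {β | i ∈ X_β}`, a set of some size `ν < λ`,
so it lies in at most `ν^{<κ} ≤ λ^{<κ}` of the new sets. When `μ < λ`, the constant family `I`
already works.
-/

theorem powerlt_le_powerlt_right {a b κ : Cardinal.{u}} (h : a ≤ b) : a ^< κ ≤ b ^< κ :=
  powerlt_le.2 fun _ hx => (power_le_power_right h).trans (le_powerlt _ hx)

theorem le_powerlt_self (a : Cardinal.{u}) {κ : Cardinal.{u}} (hκ : 1 < κ) : a ≤ a ^< κ := by
  simpa using le_powerlt a hκ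

theorem mk_bounded_set_lt_le (W : Type u) {κ : Cardinal.{u}} (hκ : ℵ₀ ≤ κ) :
    #{ t : Set W // #t < κ } ≤ max #W 2 ^< κ := by
  rcases lt_or_ge #W κ with hW | hW
  · calc #{ t : Set W // #t < κ } ≤ #(Set W) := mk_subtype_le _
      _ = 2 ^ #W := mk_set
      _ ≤ max #W 2 ^ #W := power_le_power_right (le_max_right _ _)
      _ ≤ max #W 2 ^< κ := le_powerlt _ hW
  have hWinf : ℵ₀ ≤ #W := hκ.trans hW
  have hκ1 : 1 < κ := one_lt_aleph0.trans_le hκ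
  rw [max_eq_left (ofNat_le_aleph0.trans hWinf)]
  -- sizes below `κ` are indexed by `κ.ord.ToType`, which unlike `Set.Iio κ` lives in universe `u`
  let bound : κ.ord.ToType → Cardinal.{u} := fun α => (Ordinal.ToType.mk.symm α).1.card
  have hcover : { t : Set W | #t < κ } ⊆ ⋃ α, { t | #t ≤ bound α } := by
    intro t ht
    refine Set.mem_iUnion.2 ⟨Ordinal.ToType.mk ⟨(#t).ord, ord_lt_ord.2 ht⟩, ?_⟩
    simp [bound]
  have hpiece : ∀ α, #{ t : Set W | #t ≤ bound α } ≤ #W ^< κ := fun α =>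
    calc #{ t : Set W | #t ≤ bound α } ≤ max #W ℵ₀ ^ bound α := mk_bounded_set_le _ _
      _ = #W ^ bound α := by rw [max_eq_left hWinf]
      _ ≤ #W ^< κ := le_powerlt _ (lt_ord.1 (Ordinal.ToType.mk.symm α).2)
  calc #{ t : Set W // #t < κ } ≤ #(⋃ α, { t : Set W | #t ≤ bound α }) := mk_le_mk_of_subset hcover
    _ ≤ #κ.ord.ToType * ⨆ α, #{ t : Set W | #t ≤ bound α } := mk_iUnion_le _
    _ ≤ κ * #W ^< κ := by
      rw [mk_toType, card_ord]
      exact mul_le_mul_right (ciSup_le' hpiece) _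
    _ = #W ^< κ := mul_eq_right (hWinf.trans (le_powerlt_self _ hκ1))
        (hW.trans (le_powerlt_self _ hκ1)) (by positivity)

theorem mk_bounded_subset_lt_le {α : Type u} (s : Set α) {κ : Cardinal.{u}} (hκ : ℵ₀ ≤ κ) :
    #{ t : Set α // t ⊆ s ∧ #t < κ } ≤ max #s 2 ^< κ := by
  refine le_trans ?_ (mk_bounded_set_lt_le s hκ)
  refine mk_le_of_injective (f := fun t => ⟨(↑) ⁻¹' t.1,
    (mk_preimage_of_injective _ _ Subtype.val_injective).trans_lt t.2.2⟩) ?_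
  rintro ⟨t, hts, _⟩ ⟨t', hts', _⟩ h
  refine Subtype.ext ((Set.preimage_eq_preimage' ?_ ?_).1 (congrArg Subtype.val h)) <;>
    rwa [Subtype.range_coe]

/-- Functions `x → α` are coded by their graphs, moved into `α` along `x × α ↪ α`. -/
theorem powerlt_le_mk_bounded_set_lt {α : Type u} {κ : Cardinal.{u}} (hα : ℵ₀ ≤ #α)
    (hκ : κ ≤ #α) : #α ^< κ ≤ #{ s : Set α // #s < κ } := by
  refine powerlt_le.2 fun x hx => ?_
  obtain ⟨e⟩ : Nonempty (x.out × α ↪ α) := by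
    rw [← le_def, mk_prod, mk_out, lift_id, lift_id]
    calc x * #α ≤ #α * #α := mul_le_mul_left (hx.le.trans hκ) _
      _ = #α := mul_eq_self hα
  rw [show #α ^ x = #(x.out → α) by rw [← power_def, mk_out]]
  refine mk_le_of_injective (f := fun g => ⟨Set.range fun a => e (a, g a),
    mk_range_le.trans_lt (by rwa [mk_out])⟩) fun g g' h => funext fun a => ?_
  have hrange : (Set.range fun a => e (a, g a)) = Set.range fun a => e (a, g' a) :=
    congrArg Subtype.val h
  obtain ⟨a', ha'⟩ : e (a, g a) ∈ Set.range fun a => e (a, g' a) := hrange ▸ ⟨a, rfl⟩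
  obtain ⟨rfl, hga⟩ := Prod.ext_iff.1 (e.injective ha')
  exact hga.symm

section Ultrafilter

variable {I : Type u} {D : Ultrafilter I}

theorem isRegularUF_iff {a b : Cardinal.{u}} :
    IsRegularUF D a b ↔
      ∃ X : b.out → Set I, (∀ β, X β ∈ D) ∧ ∀ i, #{ β | i ∈ X β } < a := by
  refine exists_congr fun X => and_congr_right fun _ => ⟨fun hX i => ?_, fun hX B hB => ?_⟩
  · by_contra! ha
    obtain ⟨B, hBi, hB⟩ := le_mk_iff_exists_subset.1 ha
    have hi : i ∈ ⋂ β ∈ B, X β := Set.mem_iInter₂.2 fun β hβ => hBi hβ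
    rw [hX B hB] at hi
    exact hi
  · refine Set.eq_empty_of_forall_notMem fun i hi => (hX i).not_ge ?_
    rw [← hB]
    exact mk_le_mk_of_subset fun β hβ => Set.mem_iInter₂.1 hi β hβ

theorem isRegularUF_of_family {J : Type u} {a b : Cardinal.{u}} (X : J → Set I)
    (hX : ∀ j, X j ∈ D) (hXa : ∀ i, #{ j | i ∈ X j } < a) (hJ : b ≤ #J) :
    IsRegularUF D a b := by
  obtain ⟨e⟩ : Nonempty (b.out ↪ J) := by rwa [← le_def, mk_out]
  refine isRegularUF_iff.2 ⟨X ∘ e, fun β => hX (e β), fun i => ?_⟩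
  calc #{ β | i ∈ X (e β) } = #(e '' { β | i ∈ X (e β) }) := (mk_image_eq e.injective).symm
    _ ≤ #{ j | i ∈ X j } := mk_le_mk_of_subset (Set.image_subset_iff.2 fun _ h => h)
    _ < a := hXa i

theorem IsComplete.biInter_mem {J : Type u} {κ : Cardinal.{u}} (hD : IsComplete D κ)
    {X : J → Set I} (hX : ∀ j, X j ∈ D) {s : Set J} (hs : #s < κ) : ⋂ j ∈ s, X j ∈ D := by
  rw [← Set.sInter_image]
  exact hD _ (mk_image_le.trans_lt hs) (Set.forall_mem_image.2 fun j _ => hX j)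

theorem IsComplete.le_of_isRegularUF {κ a b : Cardinal.{u}} (hD : IsComplete D κ)
    (hreg : IsRegularUF D a b) (hab : a ≤ b) : κ ≤ a := by
  obtain ⟨X, hX, hXa⟩ := hreg
  by_contra! haκ
  obtain ⟨B, hB⟩ := le_mk_iff_exists_set.1 (hab.trans (mk_out b).ge)
  simpa [hXa B hB] using hD.biInter_mem hX (hB.trans_lt haκ)

theorem mk_setOf_mem_biInter_le {J : Type u} (X : J → Set I) (i : I) {κ : Cardinal.{u}}
    (hκ : ℵ₀ ≤ κ) :
    #{ s : { s : Set J // #s < κ } | i ∈ ⋂ j ∈ s.1, X j } ≤ max #{ j | i ∈ X j } 2 ^< κ := by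
  refine le_trans ?_ (mk_bounded_subset_lt_le _ hκ)
  refine mk_le_of_injective (f := fun s => ⟨s.1.1, fun j hj => Set.mem_iInter₂.1 s.2 j hj,
    s.1.2⟩) fun s s' h => ?_
  simpa [Subtype.ext_iff] using h

theorem exists_family_of_isRegularUF {lam mu κ : Cardinal.{u}} (hmu : ℵ₀ ≤ mu) (hκ : ℵ₀ ≤ κ)
    (hreg : IsRegularUF D lam mu) (hD : IsComplete D κ) :
    ∃ (J : Type u) (Y : J → Set I), mu ^< κ ≤ #J ∧ (∀ j, Y j ∈ D) ∧
      ∀ i, ∃ ν < lam, #{ j | i ∈ Y j } ≤ max ν 2 ^< κ := by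
  rcases lt_or_ge mu lam with hmulam | hlammu
  · refine ⟨(mu ^< κ).out, fun _ => Set.univ, (mk_out _).ge, fun _ => Filter.univ_mem,
      fun i => ⟨mu, hmulam, ?_⟩⟩
    calc #{ j : (mu ^< κ).out | i ∈ Set.univ } ≤ mu ^< κ := (mk_set_le _).trans (mk_out _).le
      _ ≤ max mu 2 ^< κ := powerlt_le_powerlt_right (le_max_left _ _)
  have hκmu : κ ≤ mu := (hD.le_of_isRegularUF hreg hlammu).trans hlammu
  obtain ⟨X, hX, hXlam⟩ := isRegularUF_iff.1 hreg
  refine ⟨{ s : Set mu.out // #s < κ }, fun s => ⋂ β ∈ s.1, X β, ?_,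
    fun s => hD.biInter_mem hX s.2, fun i => ⟨_, hXlam i, mk_setOf_mem_biInter_le X i hκ⟩⟩
  simpa using powerlt_le_mk_bounded_set_lt (α := mu.out) (by simpa) (by simpa)

end Ultrafilter

/-- Proposition 8.6: if `D` is `(λ, μ)`-regular and `κ`-complete, then `D` is
`((λ^{<κ})⁺, μ^{<κ})`-regular; moreover, if `ν^{<κ} < λ^{<κ}` for every `ν < λ`,
then `D` is `(λ^{<κ}, μ^{<κ})`-regular. -/
theorem stmt18 {I : Type u} (D : Ultrafilter I) (lam mu κ : Cardinal.{u})
    (hlam : ℵ₀ ≤ lam) (hmu : ℵ₀ ≤ mu) (hκ : ℵ₀ ≤ κ)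
    (hreg : IsRegularUF D lam mu) (hcomp : IsComplete D κ) :
    IsRegularUF D (Order.succ (lam ^< κ)) (mu ^< κ) ∧
      ((∀ ν < lam, ν ^< κ < lam ^< κ) → IsRegularUF D (lam ^< κ) (mu ^< κ)) := by
  obtain ⟨J, Y, hJ, hY, hYsmall⟩ := exists_family_of_isRegularUF hmu hκ hreg hcomp
  have h2lam : (2 : Cardinal.{u}) < lam := ofNat_lt_aleph0.trans_le hlam
  refine ⟨isRegularUF_of_family Y hY (fun i => ?_) hJ,
    fun hgap => isRegularUF_of_family Y hY (fun i => ?_) hJ⟩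
  · obtain ⟨ν, hν, hi⟩ := hYsmall i
    exact Order.lt_succ_of_le (hi.trans (powerlt_le_powerlt_right (max_le hν.le h2lam.le)))
  · obtain ⟨ν, hν, hi⟩ := hYsmall i
    exact hi.trans_lt (hgap _ (max_lt hν h2lam))

end Paper
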